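/- Let ξ be a real random variable on a probability space with |ξ| ≤ C almost surely for some constant C, E[ξ] = 0 and E[ξ²] = 1. Then for every u ∈ ℝ and t > 0, the sequence n ↦ (E[exp(u·√(t/n)·ξ)])ⁿ converges, as n → ∞, to exp(u²·t/2). -/

import Mathlib

/-!
A bounded `ξ` has a moment generating function `M` that is analytic at `0`, with Taylor
coefficients the moments, so `M s = 1 + s² / 2 + o(s²)`. With `aₙ = u √(t / n)` we have
`n aₙ² = u² t`, hence `n (M aₙ - 1) → u² t / 2`, and `(1 + xₙ)ⁿ → exp L` whenever `n xₙ → L`.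
-/

open MeasureTheory ProbabilityTheory Filter Real Asymptotics Topology

namespace ProbabilityTheory

variable {Ω : Type*} {m : MeasurableSpace Ω} {X : Ω → ℝ} {μ : Measure Ω}

lemma integrableExpSet_eq_univ_of_ae_abs_le [IsFiniteMeasure μ] (hX : AEMeasurable X μ) {C : ℝ}
    (hC : ∀ᵐ ω ∂μ, |X ω| ≤ C) : integrableExpSet X μ = Set.univ := by
  refine Set.eq_univ_of_forall fun s ↦ ?_
  refine Integrable.of_bound (by fun_prop) (exp (|s| * C)) ?_
  filter_upwards [hC] with ω hω
  rw [norm_eq_abs, abs_exp, exp_le_exp]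
  calc s * X ω ≤ |s * X ω| := le_abs_self _
    _ = |s| * |X ω| := abs_mul _ _
    _ ≤ |s| * C := by gcongr

lemma mgf_sub_taylor_isLittleO_sq [IsProbabilityMeasure μ]
    (h : 0 ∈ interior (integrableExpSet X μ)) :
    (fun s ↦ mgf X μ s - (1 + μ[X] * s + μ[fun ω ↦ X ω ^ 2] / 2 * s ^ 2)) =o[𝓝 0]
      fun s ↦ s ^ 2 := by
  have hcube : (fun s : ℝ ↦ ‖s‖ ^ 3) =o[𝓝 0] fun s ↦ s ^ 2 := by
    simpa using (isLittleO_pow_pow (𝕜 := ℝ) (by norm_num : 2 < 3)).norm_left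
  simpa [FormalMultilinearSeries.partialSum, Finset.sum_range_succ, mul_comm] using
    ((hasFPowerSeriesAt_mgf h).isBigO_sub_partialSum_pow 3).trans_isLittleO hcube

end ProbabilityTheory

lemma tendsto_pow_mul_sqrt_div_of_isLittleO {f : ℝ → ℝ} {c : ℝ}
    (hf : (fun s ↦ f s - (1 + c * s ^ 2)) =o[𝓝 0] fun s ↦ s ^ 2) (u : ℝ) {t : ℝ} (ht : 0 ≤ t) :
    Tendsto (fun n : ℕ ↦ f (u * √(t / n)) ^ n) atTop (𝓝 (exp (c * (u ^ 2 * t)))) := by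
  set a : ℕ → ℝ := fun n ↦ u * √(t / n)
  have ha : Tendsto a atTop (𝓝 0) := by
    have h := ((tendsto_const_div_atTop_nhds_zero_nat t).sqrt).const_mul u
    rwa [sqrt_zero, mul_zero] at h
  have hscale : ∀ᶠ n : ℕ in atTop, (n : ℝ) * a n ^ 2 = u ^ 2 * t := by
    filter_upwards [eventually_ne_atTop 0] with n hn
    simp only [a]
    rw [mul_pow, sq_sqrt (by positivity)]
    field_simp
  have hrem : Tendsto (fun n : ℕ ↦ (n : ℝ) * (f (a n) - (1 + c * a n ^ 2))) atTop (𝓝 0) := by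
    have hbounded : (fun n : ℕ ↦ (n : ℝ) * a n ^ 2) =O[atTop] fun _ ↦ (1 : ℝ) :=
      (isBigO_const_one ℝ (u ^ 2 * t) atTop).congr' (hscale.mono fun _ hn ↦ hn.symm) .rfl
    exact isLittleO_one_iff ℝ |>.1 <|
      ((isBigO_refl _ _).mul_isLittleO (hf.comp_tendsto ha)).trans_isBigO hbounded
  have hmain : Tendsto (fun n : ℕ ↦ (n : ℝ) * (f (a n) - 1)) atTop (𝓝 (c * (u ^ 2 * t))) := by
    rw [← add_zero (c * (u ^ 2 * t))]
    refine (hrem.const_add (c * (u ^ 2 * t))).congr' ?_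
    filter_upwards [hscale] with n hn
    linear_combination (-c) * hn
  exact (tendsto_one_add_pow_exp_of_tendsto hmain).congr fun n ↦ by rw [add_sub_cancel]

/-- Let `ξ` be a bounded real random variable on a probability space with mean `0` and
second moment `1`. Then for every `u ∈ ℝ` and `t > 0`,
`(E[exp(u √(t/n) ξ)])ⁿ → exp(u² t / 2)` as `n → ∞`. -/
theorem stmt_8 {Ω : Type*} [MeasureSpace Ω] [IsProbabilityMeasure (volume : Measure Ω)]
    (ξ : Ω → ℝ) (hmeas : Measurable ξ)
    (C : ℝ) (hbdd : ∀ᵐ ω, |ξ ω| ≤ C)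
    (hmean : (∫ ω, ξ ω) = 0) (hvar : (∫ ω, (ξ ω)^2) = 1)
    (u t : ℝ) (ht : 0 < t) :
    Tendsto (fun n : ℕ => (∫ ω, Real.exp (u * Real.sqrt (t / n) * ξ ω))^n)
      atTop (nhds (Real.exp (u^2 * t / 2))) := by
  have h0 : (0 : ℝ) ∈ interior (integrableExpSet ξ volume) := by
    simp [integrableExpSet_eq_univ_of_ae_abs_le hmeas.aemeasurable hbdd]
  have htaylor := mgf_sub_taylor_isLittleO_sq h0
  simp only [hmean, hvar, zero_mul, add_zero] at htaylor
  have hlimit := tendsto_pow_mul_sqrt_div_of_isLittleO htaylor u ht.le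
  rwa [one_div_mul_eq_div] at hlimit
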